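/- arXiv:1402.3699 — 7 statements merged into one kernel-verified Lean document; each statement's English description precedes it below -/
import Mathlib

section
/- In any interchange near ring, for all x, y ∈ G, (−x) • (−y) = −(x • y). -/
theorem stmt_3 {G : Type*} [AddGroup G] (m : G → G → G)
    (hint : ∀ w x y z : G, m (w + x) (y + z) = m w y + m x z) :
    ∀ x y : G, m (-x) (-y) = -(m x y) := by
  have h0 : m 0 0 = 0 := by
    have := hint 0 0 0 0
    simpa using this
  intro x y
  have h := hint x (-x) y (-y)
  simp [h0] at h
  exact eq_neg_of_add_eq_zero_right h.symm
end

section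
/- In an interchange near ring (G, +, •), the operation • is associative if and only if for all x ∈ G: (x • 0) • 0 = x • 0, (0 • x) • 0 = 0 • (x • 0), and 0 • (0 • x) = 0 • x. -/
/-!
By the interchange law with zeros inserted, `x • y = (x • 0) + (0 • y)` and `y ↦ 0 • y` is
additive. Expanding `(x • y) • z` and `x • (y • z)` this way, associativity reduces to the three
stated identities between the maps `x ↦ x • 0` and `y ↦ 0 • y`; conversely they are instances of
associativity once `0 • 0 = 0`, which the interchange law gives by cancellation.
-/

def IsInterchange {G : Type*} [Add G] (m : G → G → G) : Prop :=
  ∀ w x y z : G, m (w + x) (y + z) = m w y + m x z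

namespace IsInterchange

section AddZeroClass

variable {G : Type*} [AddZeroClass G] {m : G → G → G}

theorem eq_add (h : IsInterchange m) (x y : G) : m x y = m x 0 + m 0 y := by
  simpa using h x 0 0 y

theorem map_zero_add (h : IsInterchange m) (x y : G) : m 0 (x + y) = m 0 x + m 0 y := by
  simpa using h 0 0 x y

theorem assoc_of_zero_laws (h : IsInterchange m) (h₁ : ∀ x, m (m x 0) 0 = m x 0)
    (h₂ : ∀ x, m (m 0 x) 0 = m 0 (m x 0)) (h₃ : ∀ x, m 0 (m 0 x) = m 0 x) (x y z : G) :
    m (m x y) z = m x (m y z) :=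
  calc m (m x y) z = m (m x 0 + m 0 y) (0 + z) := by rw [← h.eq_add, zero_add]
    _ = m (m x 0) 0 + m (m 0 y) z := h _ _ _ _
    _ = m x 0 + (m (m 0 y) 0 + m 0 z) := by rw [h₁, h.eq_add (m 0 y) z]
    _ = m x 0 + m 0 (m y 0 + m 0 z) := by rw [h₂, h.map_zero_add, h₃]
    _ = m x (m y z) := by rw [← h.eq_add, ← h.eq_add]

end AddZeroClass

section AddLeftCancelMonoid

variable {G : Type*} [AddLeftCancelMonoid G] {m : G → G → G}

theorem map_zero_zero (h : IsInterchange m) : m 0 0 = 0 :=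
  left_eq_add.mp (by simpa only [add_zero] using h 0 0 0 0)

theorem zero_laws_of_assoc (h : IsInterchange m) (hassoc : ∀ x y z, m (m x y) z = m x (m y z))
    (x : G) : m (m x 0) 0 = m x 0 ∧ m (m 0 x) 0 = m 0 (m x 0) ∧ m 0 (m 0 x) = m 0 x := by
  refine ⟨?_, hassoc 0 x 0, ?_⟩
  · rw [hassoc, h.map_zero_zero]
  · rw [← hassoc, h.map_zero_zero]

end AddLeftCancelMonoid

end IsInterchange

theorem stmt_4 {G : Type*} [AddGroup G] (m : G → G → G)
    (hint : ∀ w x y z : G, m (w + x) (y + z) = m w y + m x z) :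
    (∀ x y z : G, m (m x y) z = m x (m y z)) ↔
      (∀ x : G, m (m x 0) 0 = m x 0 ∧ m (m 0 x) 0 = m 0 (m x 0) ∧ m 0 (m 0 x) = m 0 x) := by
  have h : IsInterchange m := hint
  exact ⟨h.zero_laws_of_assoc, fun hzero =>
    h.assoc_of_zero_laws (fun x => (hzero x).1) (fun x => (hzero x).2.1) fun x => (hzero x).2.2⟩
end

section
/- If an interchange near ring (G, +, •) contains an annihilator (an element a with a • x = x • a = a for all x), then (G, •) is a zero semigroup, i.e., all products x • y are equal to a single element (namely 0). -/
theorem stmt_5 {G : Type*} [AddGroup G] (m : G → G → G)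
    (hint : ∀ w x y z : G, m (w + x) (y + z) = m w y + m x z)
    (a : G) (ha : ∀ x : G, m a x = a ∧ m x a = a) :
    ∀ x y : G, m x y = 0 := by
  have ha0 : a = 0 := by
    have h : a = a + a := by
      have := hint a 0 0 a
      simpa [(ha 0).1, (ha 0).2, (ha a).1] using this
    have := add_left_cancel (a := a) (b := 0) (c := a) (by simpa using h.symm)
    exact this.symm
  intro x y
  have := hint 0 x y 0
  have h0y : m 0 y = 0 := by rw [← ha0]; exact (ha y).1
  have hx0 : m x 0 = 0 := by rw [← ha0]; exact (ha x).2
  simpa [h0y, hx0] using this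
end

section
/- If (G, +, •) is an interchange near ring, then the maps ε(x) := x • 0 and η(x) := 0 • x are group endomorphisms of (G, +) and form an image-commuting pair, i.e., ε(x) + η(y) = η(y) + ε(x) for all x, y ∈ G. -/
theorem stmt_7 {G : Type*} [AddGroup G] (m : G → G → G)
    (hint : ∀ w x y z : G, m (w + x) (y + z) = m w y + m x z) :
    (∀ x y : G, m (x + y) 0 = m x 0 + m y 0) ∧
    (∀ x y : G, m 0 (x + y) = m 0 x + m 0 y) ∧
    (∀ x y : G, m x 0 + m 0 y = m 0 y + m x 0) := by
  refine ⟨fun x y => by simpa using hint x y 0 0,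
          fun x y => by simpa using hint 0 0 x y,
          fun x y => ?_⟩
  have h1 : m x 0 + m 0 y = m x y := by simpa using (hint x 0 0 y).symm
  have h2 : m 0 y + m x 0 = m x y := by simpa using (hint 0 x y 0).symm
  rw [h1, h2]
end

section
/- Let (G, +) be a group and let (ε₁, η₁) and (ε₂, η₂) be image-commuting pairs of endomorphisms of G, with products x •₁ y = ε₁(x) + η₁(y) and x •₂ y = ε₂(x) + η₂(y). Then there is a group automorphism φ of G satisfying φ(x •₁ y) = φ(x) •₂ φ(y) for all x, y if and only if there is an automorphism α of G with α⁻¹ ∘ ε₁ ∘ α = ε₂ and α⁻¹ ∘ η₁ ∘ α = η₂. -/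
theorem stmt_9 {G : Type*} [AddGroup G] (ε₁ η₁ ε₂ η₂ : G →+ G)
    (h₁ : ∀ x y : G, ε₁ x + η₁ y = η₁ y + ε₁ x)
    (h₂ : ∀ x y : G, ε₂ x + η₂ y = η₂ y + ε₂ x) :
    (∃ φ : G ≃+ G, ∀ x y : G, φ (ε₁ x + η₁ y) = ε₂ (φ x) + η₂ (φ y)) ↔
      (∃ α : G ≃+ G, (∀ x : G, α.symm (ε₁ (α x)) = ε₂ x) ∧
        (∀ x : G, α.symm (η₁ (α x)) = η₂ x)) := by
  constructor
  · rintro ⟨φ, hφ⟩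
    refine ⟨φ.symm, fun x => ?_, fun x => ?_⟩
    · have := hφ (φ.symm x) 0
      simp at this
      simpa using this
    · have := hφ 0 (φ.symm x)
      simp at this
      simpa using this
  · rintro ⟨α, hε, hη⟩
    refine ⟨α.symm, fun x y => ?_⟩
    rw [map_add, ← hε (α.symm x), ← hη (α.symm y)]
    simp
end

section
/- Let (G, +) be a group, (ε, η) an image-commuting pair of endomorphisms of G, and define x • y = ε(x) + η(y). Then • is associative if and only if ε ∘ ε = ε, η ∘ η = η, and ε ∘ η = η ∘ ε. -/
theorem stmt_12 {G : Type*} [AddGroup G] (ε η : G →+ G)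
    (hcomm : ∀ x y : G, ε x + η y = η y + ε x) :
    (∀ x y z : G, ε (ε x + η y) + η z = ε x + η (ε y + η z)) ↔
      ((∀ x : G, ε (ε x) = ε x) ∧ (∀ x : G, η (η x) = η x) ∧
        (∀ x : G, ε (η x) = η (ε x))) := by
  constructor
  · intro h
    refine ⟨fun x => ?_, fun z => ?_, fun y => ?_⟩
    · have := h x 0 0; simpa using this
    · have := h 0 0 z; simpa using this.symm
    · have := h 0 y 0; simpa using this
  · rintro ⟨he, hh, hc⟩ x y z
    simp [map_add, he, hh, hc, add_assoc]
end

section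
/- Let (R, +, •) be an interchange near ring and I a normal subgroup of (R, +) that is closed under •. Then the relation x ∼ y iff x − y ∈ I is a congruence for •: if x₁ − x₂ ∈ I and y₁ − y₂ ∈ I then (x₁ • y₁) − (x₂ • y₂) ∈ I. -/
theorem stmt_18 {R : Type*} [AddGroup R] (m : R → R → R)
    (hint : ∀ w x y z : R, m (w + x) (y + z) = m w y + m x z)
    (I : AddSubgroup R) (hN : I.Normal)
    (hclosed : ∀ a ∈ I, ∀ b ∈ I, m a b ∈ I) :
    ∀ x₁ x₂ y₁ y₂ : R, x₁ - x₂ ∈ I → y₁ - y₂ ∈ I → m x₁ y₁ - m x₂ y₂ ∈ I := by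
  intro x₁ x₂ y₁ y₂ hx hy
  have h : m x₁ y₁ = m (x₁ - x₂) (y₁ - y₂) + m x₂ y₂ := by
    rw [← hint, sub_add_cancel, sub_add_cancel]
  rw [h, add_sub_cancel_right]
  exact hclosed _ hx _ hy
end
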